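/- Let d ≥ 3, let φ_0, φ_1 ∈ ℂ^N, and define the spinor field ψ(x) := (1+|x|²)^{−d/2} (φ_0 + (γ·x) φ_1). Then for all x ∈ ℝ^d: γ·(-i∇)ψ(x) = −i d (1+|x|²)^{−(d+2)/2} (φ_1 − (γ·x) φ_0). -/

import Mathlib

/-!
Write `ψ = ρ ^ (-d/2) • χ` with `ρ x = 1 + ‖x‖²` and `χ x = φ₀ + (γ·x) φ₁`. The Leibniz rule
`D (f • χ) = f • D χ - i (γ·∇f) χ`, together with `D χ = -i d φ₁` (because `γⱼ² = 1`) and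
`∇ (ρ ^ p) = 2 p ρ ^ (p - 1) x`, gives `D ψ = -i d ρ ^ (-d/2 - 1) (ρ φ₁ - (γ·x) χ x)`. The Clifford
relation `(γ·x)² = ‖x‖²` turns `(γ·x) χ x` into `(γ·x) φ₀ + ‖x‖² φ₁`, and `ρ - ‖x‖² = 1`.
-/

open MeasureTheory Complex Filter ENNReal

noncomputable section

/-- `ℝ^d` with the Euclidean norm. -/
abbrev ESp (d : ℕ) := EuclideanSpace ℝ (Fin d)

/-- Spinor space `ℂ^N` with the Hermitian norm. -/
abbrev Spinor (N : ℕ) := EuclideanSpace ℂ (Fin N)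

/-- Action of an `N × N` complex matrix on a spinor. -/
def mulVecE {N : ℕ} (M : Matrix (Fin N) (Fin N) ℂ) (v : Spinor N) : Spinor N :=
  Matrix.toEuclideanLin M v

/-- Partial derivative in the `j`-th coordinate direction. -/
def pd {d : ℕ} {V : Type*} [NormedAddCommGroup V] [NormedSpace ℝ V]
    (j : Fin d) (f : ESp d → V) (x : ESp d) : V :=
  fderiv ℝ f x (EuclideanSpace.single j 1)

/-- The Dirac operator `γ·(-i∇)ψ = ∑ⱼ γⱼ (-i ∂ⱼ ψ)`. -/
def dirac {d N : ℕ} (γ : Fin d → Matrix (Fin N) (Fin N) ℂ)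
    (ψ : ESp d → Spinor N) (x : ESp d) : Spinor N :=
  ∑ j, mulVecE (γ j) ((-Complex.I) • pd j ψ x)

/-- `γ·a = ∑ⱼ aⱼ γⱼ` for a real vector `a`. -/
def gdotR {d N : ℕ} (γ : Fin d → Matrix (Fin N) (Fin N) ℂ) (v : ESp d) :
    Matrix (Fin N) (Fin N) ℂ :=
  ∑ j, (v j : ℂ) • γ j

open InnerProductSpace

section MulVecE

variable {N : ℕ} {R : Type*} [SMul R ℂ]

lemma mulVecE_add (M : Matrix (Fin N) (Fin N) ℂ) (u v : Spinor N) :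
    mulVecE M (u + v) = mulVecE M u + mulVecE M v :=
  map_add _ u v

lemma mulVecE_smul [SMul R (Spinor N)] [IsScalarTower R ℂ (Spinor N)]
    (M : Matrix (Fin N) (Fin N) ℂ) (c : R) (v : Spinor N) :
    mulVecE M (c • v) = c • mulVecE M v :=
  LinearMap.map_smul_of_tower _ c v

lemma smul_mulVecE [IsScalarTower R ℂ ℂ] [SMul R (Spinor N)] [IsScalarTower R ℂ (Spinor N)]
    (c : R) (M : Matrix (Fin N) (Fin N) ℂ) (v : Spinor N) :
    mulVecE (c • M) v = c • mulVecE M v := by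
  simp only [mulVecE]
  rw [← smul_one_smul ℂ c M, map_smul, LinearMap.smul_apply, smul_one_smul]

lemma mulVecE_one (v : Spinor N) : mulVecE 1 v = v := by
  simp [mulVecE]

lemma mulVecE_mul (M M' : Matrix (Fin N) (Fin N) ℂ) (v : Spinor N) :
    mulVecE (M * M') v = mulVecE M (mulVecE M' v) := by
  simp [mulVecE]

lemma sum_mulVecE {ι : Type*} (s : Finset ι) (M : ι → Matrix (Fin N) (Fin N) ℂ) (v : Spinor N) :
    mulVecE (∑ i ∈ s, M i) v = ∑ i ∈ s, mulVecE (M i) v := by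
  simp [mulVecE, map_sum]

end MulVecE

section Clifford

variable {d N : ℕ} (γ : Fin d → Matrix (Fin N) (Fin N) ℂ)

lemma gdotR_smul (r : ℝ) (v : ESp d) : gdotR γ (r • v) = r • gdotR γ v := by
  simp only [gdotR, Finset.smul_sum, PiLp.smul_apply, smul_eq_mul, Complex.ofReal_mul, mul_smul,
    Complex.coe_smul]

lemma gdotR_single (j : Fin d) : gdotR γ (EuclideanSpace.single j 1) = γ j := by
  simp [gdotR]

lemma mulVecE_gdotR (v : ESp d) (φ : Spinor N) :
    mulVecE (gdotR γ v) φ = ∑ j, v j • mulVecE (γ j) φ := by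
  simp only [gdotR, sum_mulVecE, smul_mulVecE, Complex.coe_smul]

variable {γ}

lemma gdotR_mul_self
    (hanti : ∀ j k, γ j * γ k + γ k * γ j = if j = k then (2 : ℂ) • 1 else 0) (v : ESp d) :
    gdotR γ v * gdotR γ v = ((‖v‖ ^ 2 : ℝ) : ℂ) • 1 := by
  have hexpand : gdotR γ v * gdotR γ v = ∑ j, ∑ k, ((v j : ℂ) * v k) • (γ j * γ k) := by
    simp_rw [gdotR, Finset.sum_mul_sum, smul_mul_smul_comm]
  have hswap : gdotR γ v * gdotR γ v = ∑ j, ∑ k, ((v j : ℂ) * v k) • (γ k * γ j) := by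
    rw [hexpand, Finset.sum_comm]
    exact Finset.sum_congr rfl fun j _ => Finset.sum_congr rfl fun k _ => by
      rw [mul_comm (v k : ℂ)]
  refine smul_right_injective _ (two_ne_zero' ℂ) ?_
  calc (2 : ℂ) • (gdotR γ v * gdotR γ v)
      = ∑ j, ∑ k, ((v j : ℂ) * v k) • (γ j * γ k + γ k * γ j) := by
        rw [two_smul]
        nth_rewrite 1 [hexpand]
        rw [hswap]
        simp_rw [← Finset.sum_add_distrib, smul_add]
    _ = ∑ j, ((v j : ℂ) * v j) • ((2 : ℂ) • 1) := by
        simp_rw [hanti, smul_ite, smul_zero, Finset.sum_ite_eq, Finset.mem_univ, if_true]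
    _ = (2 : ℂ) • (((‖v‖ ^ 2 : ℝ) : ℂ) • 1) := by
        rw [← Finset.sum_smul, smul_comm (2 : ℂ), EuclideanSpace.norm_sq_eq]
        simp only [Real.norm_eq_abs, sq_abs]
        push_cast
        simp only [sq]

lemma gamma_mul_self
    (hanti : ∀ j k, γ j * γ k + γ k * γ j = if j = k then (2 : ℂ) • 1 else 0) (j : Fin d) :
    γ j * γ j = 1 := by
  simpa [gdotR_single] using gdotR_mul_self hanti (EuclideanSpace.single j 1)

end Clifford

section Dirac

variable {d N : ℕ}

def gdotRMulVecE (γ : Fin d → Matrix (Fin N) (Fin N) ℂ) (φ : Spinor N) : ESp d →L[ℝ] Spinor N :=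
  ∑ j, (EuclideanSpace.proj j : ESp d →L[ℝ] ℝ).smulRight (mulVecE (γ j) φ)

lemma gdotRMulVecE_apply (γ : Fin d → Matrix (Fin N) (Fin N) ℂ) (φ : Spinor N) (v : ESp d) :
    gdotRMulVecE γ φ v = mulVecE (gdotR γ v) φ := by
  simp [gdotRMulVecE, mulVecE_gdotR]

lemma pd_const_add_clm {V : Type*} [NormedAddCommGroup V] [NormedSpace ℝ V]
    (c : V) (L : ESp d →L[ℝ] V) (j : Fin d) (x : ESp d) :
    pd j (fun y => c + L y) x = L (EuclideanSpace.single j 1) := by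
  rw [pd, fderiv_const_add, ContinuousLinearMap.fderiv]

lemma pd_smul {V : Type*} [NormedAddCommGroup V] [NormedSpace ℝ V]
    {f : ESp d → ℝ} {χ : ESp d → V} {x v : ESp d}
    (hf : HasGradientAt f v x) (hχ : DifferentiableAt ℝ χ x) (j : Fin d) :
    pd j (fun y => f y • χ y) x = f x • pd j χ x + v j • χ x := by
  have h : HasFDerivAt (fun y => f y • χ y) _ x := hf.hasFDerivAt.smul hχ.hasFDerivAt
  rw [pd, pd, h.fderiv]
  simp [toDual_apply_apply, EuclideanSpace.inner_single_right]

variable {γ : Fin d → Matrix (Fin N) (Fin N) ℂ}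

lemma dirac_smul {f : ESp d → ℝ} {χ : ESp d → Spinor N} {x v : ESp d}
    (hf : HasGradientAt f v x) (hχ : DifferentiableAt ℝ χ x) :
    dirac γ (fun y => f y • χ y) x
      = f x • dirac γ χ x + (-Complex.I) • mulVecE (gdotR γ v) (χ x) := by
  simp only [dirac, pd_smul hf hχ, mulVecE_gdotR, smul_add, mulVecE_add, mulVecE_smul,
    Finset.sum_add_distrib, Finset.smul_sum, smul_comm (f x)]

lemma dirac_const_add_gdotR_mulVecE
    (hanti : ∀ j k, γ j * γ k + γ k * γ j = if j = k then (2 : ℂ) • 1 else 0)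
    (φ₀ φ₁ : Spinor N) (x : ESp d) :
    dirac γ (fun y => φ₀ + mulVecE (gdotR γ y) φ₁) x = ((-Complex.I) * d) • φ₁ := by
  have hclm : (fun y => φ₀ + mulVecE (gdotR γ y) φ₁) = fun y => φ₀ + gdotRMulVecE γ φ₁ y := by
    simp only [gdotRMulVecE_apply]
  simp only [hclm, dirac, pd_const_add_clm, gdotRMulVecE_apply, gdotR_single,
    mulVecE_smul, ← mulVecE_mul, gamma_mul_self hanti, mulVecE_one, Finset.sum_const,
    Finset.card_univ, Fintype.card_fin]
  rw [← Nat.cast_smul_eq_nsmul ℂ, smul_smul, mul_comm]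

end Dirac

lemma hasGradientAt_one_add_norm_sq_rpow {F : Type*} [NormedAddCommGroup F]
    [InnerProductSpace ℝ F] [CompleteSpace F] (p : ℝ) (x : F) :
    HasGradientAt (fun y => (1 + ‖y‖ ^ 2) ^ p) ((2 * p * (1 + ‖x‖ ^ 2) ^ (p - 1)) • x) x := by
  rw [hasGradientAt_iff_hasFDerivAt]
  refine (((hasStrictFDerivAt_norm_sq x).hasFDerivAt.const_add 1).rpow_const
    (p := p) (Or.inl (by positivity))).congr_fderiv ?_
  ext y
  simp [toDual_apply_apply]
  ring

theorem dirac_of_model_spinor_general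
    (d : ℕ) (N : ℕ)
    (γ : Fin d → Matrix (Fin N) (Fin N) ℂ)
    (hanti : ∀ j k, γ j * γ k + γ k * γ j = if j = k then (2 : ℂ) • 1 else 0)
    (φ₀ φ₁ : Spinor N)
    (ψ : ESp d → Spinor N)
    (hψ : ψ = fun x => (((1 + ‖x‖ ^ 2) ^ (-(d : ℝ) / 2) : ℝ))
      • (φ₀ + mulVecE (gdotR γ x) φ₁)) :
    ∀ x : ESp d,
      dirac γ ψ x
        = ((-Complex.I) * (d : ℂ))
            • ((((1 + ‖x‖ ^ 2) ^ (-((d : ℝ) + 2) / 2) : ℝ))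
                • (φ₁ - mulVecE (gdotR γ x) φ₀)) := by
  intro x
  have hχ : DifferentiableAt ℝ (fun y => φ₀ + mulVecE (gdotR γ y) φ₁) x := by
    simpa only [gdotRMulVecE_apply] using ((gdotRMulVecE γ φ₁).differentiableAt).const_add φ₀
  rw [hψ, dirac_smul (hasGradientAt_one_add_norm_sq_rpow _ x) hχ,
    dirac_const_add_gdotR_mulVecE hanti, gdotR_smul, smul_mulVecE, mulVecE_add, ← mulVecE_mul,
    gdotR_mul_self hanti, smul_mulVecE, mulVecE_one]
  have hexp : -((d : ℝ) + 2) / 2 = -(d : ℝ) / 2 - 1 := by ring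
  have hpow : (1 + ‖x‖ ^ 2) ^ (-(d : ℝ) / 2)
      = (1 + ‖x‖ ^ 2) * (1 + ‖x‖ ^ 2) ^ (-(d : ℝ) / 2 - 1) := by
    rw [Real.rpow_sub (by positivity), Real.rpow_one]
    field_simp
  rw [hexp, hpow, Complex.coe_smul]
  generalize (1 + ‖x‖ ^ 2) ^ (-(d : ℝ) / 2 - 1) = g
  module

/-- For `ψ(x) = (1+|x|²)^{-d/2}(φ₀ + (γ·x)φ₁)` one has
`γ·(-i∇)ψ(x) = -i d (1+|x|²)^{-(d+2)/2}(φ₁ - (γ·x)φ₀)`. -/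
theorem dirac_of_model_spinor
    (d : ℕ) (hd : 3 ≤ d) (N : ℕ) (hN : N = 2 ^ (d / 2))
    (γ : Fin d → Matrix (Fin N) (Fin N) ℂ)
    (hherm : ∀ j, (γ j).IsHermitian)
    (hanti : ∀ j k, γ j * γ k + γ k * γ j = if j = k then (2 : ℂ) • 1 else 0)
    (φ₀ φ₁ : Spinor N)
    (ψ : ESp d → Spinor N)
    (hψ : ψ = fun x => (((1 + ‖x‖ ^ 2) ^ (-(d : ℝ) / 2) : ℝ))
      • (φ₀ + mulVecE (gdotR γ x) φ₁)) :
    ∀ x : ESp d,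
      dirac γ ψ x
        = ((-Complex.I) * (d : ℂ))
            • ((((1 + ‖x‖ ^ 2) ^ (-((d : ℝ) + 2) / 2) : ℝ))
                • (φ₁ - mulVecE (gdotR γ x) φ₀)) :=
  dirac_of_model_spinor_general d N γ hanti φ₀ φ₁ ψ hψ
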